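/- The image of Ψ : SL(2,ℝ) → Ein³ is exactly the set of points [X:Y:Z:U:V] of the projectivized null cone of Q with U ≠ V; equivalently, the complement of the image of Ψ in Ein³ is the fixed-point set of the involution [X:Y:Z:U:V] ↦ [X:Y:Z:V:U]. -/

import Mathlib

/-
On `Ψ M` one has `V - U = 4` and `Q(Ψ M) = 4 (1 - det M)`, and `M` is recovered affinely from
`Ψ M`. Hence the vectors `Ψ M` with `det M = 1` are exactly the null vectors with `V - U = 4`,
and a null line meets that affine hyperplane iff `U ≠ V`. A null vector with `swap v = c v` and
`U ≠ V` has `c ≠ 1`, which forces `X = Y = Z = 0`, then `UV = 0`, then `U = V = 0`.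
-/

open Matrix

/-- The map `Ψ` in homogeneous coordinates:
`[[a,b],[c,d]] ↦ (a-d, b+c, b-c, a+d-2, a+d+2)`. -/
def psiVec (M : Matrix (Fin 2) (Fin 2) ℝ) : Fin 5 → ℝ :=
  ![M 0 0 - M 1 1, M 0 1 + M 1 0, M 0 1 - M 1 0, M 0 0 + M 1 1 - 2, M 0 0 + M 1 1 + 2]

/-- The involution `I_S : [X:Y:Z:U:V] ↦ [X:Y:Z:V:U]` on homogeneous coordinates. -/
def swapUV (v : Fin 5 → ℝ) : Fin 5 → ℝ := ![v 0, v 1, v 2, v 4, v 3]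

def quadQ (v : Fin 5 → ℝ) : ℝ := v 0 ^ 2 + v 1 ^ 2 - v 2 ^ 2 - v 3 * v 4

lemma quadQ_smul (c : ℝ) (v : Fin 5 → ℝ) : quadQ (c • v) = c ^ 2 * quadQ v := by
  simp only [quadQ, Pi.smul_apply, smul_eq_mul]
  ring

lemma quadQ_psiVec (M : Matrix (Fin 2) (Fin 2) ℝ) : quadQ (psiVec M) = 4 * (1 - M.det) := by
  simp [quadQ, psiVec, det_fin_two]
  ring

lemma psiVec_four_sub_psiVec_three (M : Matrix (Fin 2) (Fin 2) ℝ) :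
    psiVec M 4 - psiVec M 3 = 4 := by
  simp [psiVec]
  ring

noncomputable def psiVecInv (w : Fin 5 → ℝ) : Matrix (Fin 2) (Fin 2) ℝ :=
  !![(w 3 + 2 + w 0) / 2, (w 1 + w 2) / 2; (w 1 - w 2) / 2, (w 3 + 2 - w 0) / 2]

lemma psiVec_psiVecInv {w : Fin 5 → ℝ} (hw : w 4 - w 3 = 4) : psiVec (psiVecInv w) = w := by
  funext i
  fin_cases i <;> simp [psiVec, psiVecInv] <;> linarith

lemma exists_det_eq_one_psiVec_eq_iff (w : Fin 5 → ℝ) :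
    (∃ M : Matrix (Fin 2) (Fin 2) ℝ, M.det = 1 ∧ psiVec M = w) ↔
      quadQ w = 0 ∧ w 4 - w 3 = 4 := by
  constructor
  · rintro ⟨M, hM, rfl⟩
    exact ⟨by rw [quadQ_psiVec, hM, sub_self, mul_zero], psiVec_four_sub_psiVec_three M⟩
  · rintro ⟨hQ, hw⟩
    have hdet := quadQ_psiVec (psiVecInv w)
    rw [psiVec_psiVecInv hw, hQ] at hdet
    exact ⟨psiVecInv w, by linarith, psiVec_psiVecInv hw⟩

lemma exists_psiVec_eq_smul_iff {v : Fin 5 → ℝ} (hQ : quadQ v = 0) :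
    (∃ M : Matrix (Fin 2) (Fin 2) ℝ, M.det = 1 ∧ ∃ c : ℝ, c ≠ 0 ∧ psiVec M = c • v) ↔
      v 3 ≠ v 4 := by
  constructor
  · rintro ⟨M, -, c, -, hM⟩ hUV
    have h := psiVec_four_sub_psiVec_three M
    simp [hM, hUV] at h
  · intro hUV
    have hUV' : v 4 - v 3 ≠ 0 := sub_ne_zero.2 hUV.symm
    set c := 4 / (v 4 - v 3)
    have hc : c ≠ 0 := div_ne_zero four_ne_zero hUV'
    have hcv : (c • v) 4 - (c • v) 3 = 4 := by
      simp only [Pi.smul_apply, smul_eq_mul, ← mul_sub, c]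
      field_simp
    obtain ⟨M, hM, hMv⟩ := (exists_det_eq_one_psiVec_eq_iff (c • v)).2
      ⟨by rw [quadQ_smul, hQ, mul_zero], hcv⟩
    exact ⟨M, hM, c, hc, hMv⟩

lemma exists_swapUV_eq_smul_iff {v : Fin 5 → ℝ} (hQ : quadQ v = 0) :
    (∃ c : ℝ, c ≠ 0 ∧ swapUV v = c • v) ↔ v 3 = v 4 := by
  constructor
  · rintro ⟨c, -, hc⟩
    by_contra hUV
    have hcoord (i : Fin 5) : swapUV v i = c * v i := by rw [hc, Pi.smul_apply, smul_eq_mul]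
    have hV : v 4 = c * v 3 := hcoord 3
    have hU : v 3 = c * v 4 := hcoord 4
    have hc1 : c ≠ 1 := by rintro rfl; exact hUV (by linarith)
    have hfix (i : Fin 5) (hi : swapUV v i = v i) : v i = 0 := by
      have : (1 - c) * v i = 0 := by linarith [hcoord i]
      exact (mul_eq_zero.1 this).resolve_left (sub_ne_zero.2 hc1.symm)
    have hUV0 : v 3 * v 4 = 0 := by
      simp only [quadQ, hfix 0 rfl, hfix 1 rfl, hfix 2 rfl] at hQ
      linarith
    rcases mul_eq_zero.1 hUV0 with h | h
    · exact hUV (by rw [hV, h, mul_zero])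
    · exact hUV (by rw [hU, h, mul_zero])
  · intro hUV
    refine ⟨1, one_ne_zero, ?_⟩
    funext i
    fin_cases i <;> simp [swapUV, hUV]

theorem psi_image_characterization_general (v : Fin 5 → ℝ)
    (hQ : v 0 ^ 2 + v 1 ^ 2 - v 2 ^ 2 - v 3 * v 4 = 0) :
    ((∃ M : Matrix (Fin 2) (Fin 2) ℝ, M.det = 1 ∧ ∃ c : ℝ, c ≠ 0 ∧ psiVec M = c • v) ↔
        v 3 ≠ v 4) ∧
    ((∃ M : Matrix (Fin 2) (Fin 2) ℝ, M.det = 1 ∧ ∃ c : ℝ, c ≠ 0 ∧ psiVec M = c • v) ↔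
        ¬ ∃ c : ℝ, c ≠ 0 ∧ swapUV v = c • v) :=
  ⟨exists_psiVec_eq_smul_iff hQ,
    (exists_psiVec_eq_smul_iff hQ).trans (exists_swapUV_eq_smul_iff hQ).not.symm⟩

/-- The image of `Ψ : SL(2,ℝ) → Ein³` is exactly the set of points of the projectivized
null cone of `Q = X² + Y² - Z² - UV` with `U ≠ V`; equivalently, the complement of the
image is the fixed-point set of the involution `[X:Y:Z:U:V] ↦ [X:Y:Z:V:U]`. -/
theorem psi_image_characterization (v : Fin 5 → ℝ) (hv : v ≠ 0)
    (hQ : v 0 ^ 2 + v 1 ^ 2 - v 2 ^ 2 - v 3 * v 4 = 0) :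
    ((∃ M : Matrix (Fin 2) (Fin 2) ℝ, M.det = 1 ∧ ∃ c : ℝ, c ≠ 0 ∧ psiVec M = c • v) ↔
        v 3 ≠ v 4) ∧
    ((∃ M : Matrix (Fin 2) (Fin 2) ℝ, M.det = 1 ∧ ∃ c : ℝ, c ≠ 0 ∧ psiVec M = c • v) ↔
        ¬ ∃ c : ℝ, c ≠ 0 ∧ swapUV v = c • v) :=
  psi_image_characterization_general v hQ
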